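/- (Smooth part of the stationarity of cluster points, from Lemma III.2) Let Assumption 1 hold and let (x^k), (y^k), (p^k) be BADMM iterates such that z^k := (x^k, y^k, p^k) is bounded. If a subsequence (x^{k_j}, y^{k_j}, p^{k_j}) converges to (x*, y*, p*), then ∇f(x*) + A^⊤p* = 0 and Ax* = By*. -/

import Mathlib

open scoped InnerProductSpace

/-- The augmented Lagrangian `L_α(x,y,p)`. -/
noncomputable def augL {n₁ n₂ m : ℕ}
    (A : EuclideanSpace ℝ (Fin n₁) →L[ℝ] EuclideanSpace ℝ (Fin m))
    (B : EuclideanSpace ℝ (Fin n₂) →L[ℝ] EuclideanSpace ℝ (Fin m))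
    (f : EuclideanSpace ℝ (Fin n₁) → ℝ) (g : EuclideanSpace ℝ (Fin n₂) → ℝ)
    (α : ℝ) (x : EuclideanSpace ℝ (Fin n₁)) (y : EuclideanSpace ℝ (Fin n₂))
    (p : EuclideanSpace ℝ (Fin m)) : ℝ :=
  f x + g y + ⟪p, A x - B y⟫_ℝ + α / 2 * ‖A x - B y‖ ^ 2

/-- Bregman distance of a differentiable function `h` with gradient `h'`. -/
noncomputable def bregman {n : ℕ} (h : EuclideanSpace ℝ (Fin n) → ℝ)
    (h' : EuclideanSpace ℝ (Fin n) → EuclideanSpace ℝ (Fin n))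
    (u v : EuclideanSpace ℝ (Fin n)) : ℝ :=
  h u - h v - ⟪h' v, u - v⟫_ℝ

/-!
The `x`-update is a Bregman proximal step, so its optimality condition reads
`∇f(xᵏ⁺¹) + Aᵀpᵏ⁺¹ = ∇φ(xᵏ) - ∇φ(xᵏ⁺¹)`. Each iteration lowers `L_α` by `(μ₁/2)‖Δxᵏ‖²`, up to
the dual ascent `‖Δpᵏ‖²/α`, and that optimality condition together with `AAᵀ ⪰ μ₀I` bounds
`‖Δpᵏ⁺¹‖` by the last two primal steps. The lower bound on `α` makes
`L_α(zᵏ⁺¹) + (2ℓ_φ²/(αμ₀))‖Δxᵏ‖²` a Lyapunov function, bounded below since the iterates are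
bounded; hence `Δx` and `Δp` are square summable, the residuals `∇f(xᵏ) + Aᵀpᵏ` and
`Axᵏ - Byᵏ = Δpᵏ⁻¹/α` tend to zero, and the claim follows along the subsequence.
-/

open Set Filter Topology ContinuousLinearMap

section Gradient

variable {E F : Type*} [NormedAddCommGroup E] [InnerProductSpace ℝ E] [CompleteSpace E]
  [NormedAddCommGroup F] [InnerProductSpace ℝ F] [CompleteSpace F]
  {f g : E → ℝ} {a b x : E}

theorem HasGradientAt.add (hf : HasGradientAt f a x) (hg : HasGradientAt g b x) :
    HasGradientAt (fun y => f y + g y) (a + b) x := by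
  rw [hasGradientAt_iff_hasFDerivAt, map_add]
  exact HasFDerivAt.add hf hg

theorem HasGradientAt.sub (hf : HasGradientAt f a x) (hg : HasGradientAt g b x) :
    HasGradientAt (fun y => f y - g y) (a - b) x := by
  rw [hasGradientAt_iff_hasFDerivAt, map_sub]
  exact HasFDerivAt.sub hf hg

theorem HasGradientAt.const_mul (c : ℝ) (hf : HasGradientAt f a x) :
    HasGradientAt (fun y => c * f y) (c • a) x := by
  rw [hasGradientAt_iff_hasFDerivAt, map_smul]
  exact HasFDerivAt.const_mul hf c

theorem IsLocalMin.hasGradientAt_eq_zero (h : IsLocalMin f x) (hf : HasGradientAt f a x) :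
    a = 0 :=
  (InnerProductSpace.toDual ℝ E).map_eq_zero_iff.mp (h.hasFDerivAt_eq_zero hf)

theorem hasGradientAt_inner_apply_sub (T : E →L[ℝ] F) (w c : F) (x : E) :
    HasGradientAt (fun x => ⟪w, T x - c⟫_ℝ) (adjoint T w) x := by
  have h := ((innerSL ℝ w).comp T).hasFDerivAt (x := x) |>.sub_const ⟪w, c⟫_ℝ
  simp only [comp_apply, innerSL_apply_apply, ← inner_sub_right] at h
  refine h.congr_fderiv ?_
  ext z
  simp [adjoint_inner_left]

theorem hasGradientAt_norm_apply_sub_sq (T : E →L[ℝ] F) (c : F) (x : E) :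
    HasGradientAt (fun x => ‖T x - c‖ ^ 2) ((2 : ℝ) • adjoint T (T x - c)) x := by
  refine (T.hasFDerivAt.sub_const c).norm_sq.congr_fderiv ?_
  ext z
  simp [adjoint_inner_left]

theorem hasGradientAt_norm_sq (x : E) : HasGradientAt (fun x => ‖x‖ ^ 2) ((2 : ℝ) • x) x := by
  refine (hasStrictFDerivAt_norm_sq x).hasFDerivAt.congr_fderiv ?_
  ext z
  simp

theorem ConvexOn.add_inner_le_of_hasGradientAt (hf : ConvexOn ℝ univ f)
    (hd : HasGradientAt f a x) (y : E) : f x + ⟪a, y - x⟫_ℝ ≤ f y := by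
  let ℓ : ℝ →ᵃ[ℝ] E := AffineMap.lineMap x y
  have hℓ : HasDerivAt (f ∘ ℓ) ⟪a, y - x⟫_ℝ 0 := by
    have hd' : HasFDerivAt f (InnerProductSpace.toDual ℝ E a) (ℓ 0) := by
      simpa [ℓ] using hd.hasFDerivAt
    simpa [ℓ] using hd'.comp_hasDerivAt 0 AffineMap.hasDerivAt_lineMap
  have := (hf.comp_affineMap ℓ).le_slope_of_hasDerivAt (mem_univ 0) (mem_univ 1) one_pos hℓ
  simp [ℓ, slope_def_field] at this
  linarith

theorem StrongConvexOn.add_inner_add_le_of_hasGradientAt {μ : ℝ} (hf : StrongConvexOn univ μ f)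
    (hd : HasGradientAt f a x) (y : E) :
    f x + ⟪a, y - x⟫_ℝ + μ / 2 * ‖y - x‖ ^ 2 ≤ f y := by
  have h := (strongConvexOn_iff_convex.mp hf).add_inner_le_of_hasGradientAt
    (hd.sub ((hasGradientAt_norm_sq x).const_mul (μ / 2))) y
  simp only [inner_sub_left, inner_sub_right, real_inner_smul_left,
    real_inner_self_eq_norm_sq] at h
  rw [norm_sub_sq_real, inner_sub_right, real_inner_comm x y]
  linarith

end Gradient

theorem summable_sq_of_descent {L a b : ℕ → ℝ} {c d e P Q : ℝ} (hL : BddBelow (range L))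
    (hdesc : ∀ k, L (k + 1) + c * a k ^ 2 ≤ L k + d * b k ^ 2)
    (hb : ∀ k, e * b (k + 1) ^ 2 ≤ P * a (k + 1) ^ 2 + Q * a k ^ 2)
    (he : 0 < e) (hd : 0 ≤ d) (hQ : 0 ≤ Q) (hgap : d * (P + Q) < c * e) :
    Summable (fun k => a k ^ 2) ∧ Summable (fun k => b k ^ 2) := by
  obtain ⟨M, hM⟩ := hL
  set δ := c * e - d * (P + Q)
  have hδ : 0 < δ := sub_pos.mpr hgap
  -- the Lyapunov function absorbs the dual error term of the next step
  set V : ℕ → ℝ := fun k => e * L (k + 1) + d * Q * a k ^ 2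
  have hV : ∀ k, V (k + 1) + δ * a (k + 1) ^ 2 ≤ V k := fun k => by
    have h₁ := mul_le_mul_of_nonneg_left (hdesc (k + 1)) he.le
    have h₂ := mul_le_mul_of_nonneg_left (hb k) hd
    simp only [V, δ]
    linarith
  have hV_ge : ∀ k, e * M ≤ V k := fun k => by
    have := mul_le_mul_of_nonneg_left (hM (mem_range_self (k + 1))) he.le
    have : 0 ≤ d * Q * a k ^ 2 := by positivity
    simp only [V]
    linarith
  have htel : ∀ N, δ * ∑ k ∈ Finset.range N, a (k + 1) ^ 2 ≤ V 0 - V N := fun N => by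
    induction N with
    | zero => simp
    | succ N ih => rw [Finset.sum_range_succ]; linarith [hV N]
  have ha : Summable fun k => a (k + 1) ^ 2 :=
    summable_of_sum_range_le (c := (V 0 - e * M) / δ) (fun _ => sq_nonneg _) fun N => by
      rw [le_div_iff₀ hδ]
      linarith [htel N, hV_ge N]
  have ha' : Summable fun k => a k ^ 2 := (summable_nat_add_iff 1).mp ha
  refine ⟨ha', (summable_nat_add_iff 1).mp ?_⟩
  refine ((ha.mul_left P).add (ha'.mul_left Q)).div_const e |>.of_nonneg_of_le
    (fun _ => sq_nonneg _) fun k => ?_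
  rw [le_div_iff₀ he, mul_comm]
  exact hb k

theorem tendsto_zero_of_summable_norm_sq {E : Type*} [SeminormedAddCommGroup E] {v : ℕ → E}
    (h : Summable fun k => ‖v k‖ ^ 2) : Tendsto v atTop (𝓝 0) := by
  rw [tendsto_zero_iff_norm_tendsto_zero]
  simpa [Real.sqrt_sq (norm_nonneg _)] using h.tendsto_atTop_zero.sqrt

theorem sq_norm_dual_step_le {E F : Type*} [NormedAddCommGroup E] [NormedSpace ℝ E]
    [NormedAddCommGroup F] [NormedSpace ℝ F] {x : ℕ → E} {p : ℕ → F} {f' φ' : E → E}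
    {T : F →L[ℝ] E} {ℓf ℓφ μ₀ : ℝ}
    (hstat : ∀ k, f' (x (k + 1)) + T (p (k + 1)) = φ' (x k) - φ' (x (k + 1)))
    (hf' : ∀ u v, ‖f' u - f' v‖ ≤ ℓf * ‖u - v‖) (hφ' : ∀ u v, ‖φ' u - φ' v‖ ≤ ℓφ * ‖u - v‖)
    (hT : ∀ q, μ₀ * ‖q‖ ^ 2 ≤ ‖T q‖ ^ 2) (k : ℕ) :
    μ₀ * ‖p (k + 1 + 1) - p (k + 1)‖ ^ 2 ≤
      2 * (ℓf + ℓφ) ^ 2 * ‖x (k + 1 + 1) - x (k + 1)‖ ^ 2 + 2 * ℓφ ^ 2 * ‖x (k + 1) - x k‖ ^ 2 := by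
  set d₁ := ‖x (k + 1 + 1) - x (k + 1)‖
  set d₀ := ‖x (k + 1) - x k‖
  have hTΔ : T (p (k + 1 + 1) - p (k + 1)) = (φ' (x (k + 1)) - φ' (x k)) -
      (f' (x (k + 1 + 1)) - f' (x (k + 1))) - (φ' (x (k + 1 + 1)) - φ' (x (k + 1))) := by
    rw [map_sub, eq_sub_of_add_eq' (hstat k), eq_sub_of_add_eq' (hstat (k + 1))]
    abel
  have hbound : ‖T (p (k + 1 + 1) - p (k + 1))‖ ≤ (ℓf + ℓφ) * d₁ + ℓφ * d₀ := by
    rw [hTΔ]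
    refine (norm_sub_le _ _).trans ?_
    linarith [norm_sub_le (φ' (x (k + 1)) - φ' (x k)) (f' (x (k + 1 + 1)) - f' (x (k + 1))),
      hf' (x (k + 1 + 1)) (x (k + 1)), hφ' (x (k + 1 + 1)) (x (k + 1)), hφ' (x (k + 1)) (x k)]
  calc μ₀ * ‖p (k + 1 + 1) - p (k + 1)‖ ^ 2
      ≤ ‖T (p (k + 1 + 1) - p (k + 1))‖ ^ 2 := hT _
    _ ≤ ((ℓf + ℓφ) * d₁ + ℓφ * d₀) ^ 2 := pow_le_pow_left₀ (norm_nonneg _) hbound 2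
    _ ≤ 2 * (ℓf + ℓφ) ^ 2 * d₁ ^ 2 + 2 * ℓφ ^ 2 * d₀ ^ 2 := by
      nlinarith [sq_nonneg ((ℓf + ℓφ) * d₁ - ℓφ * d₀)]

section Bregman

variable {n : ℕ} {h : EuclideanSpace ℝ (Fin n) → ℝ}
  {h' : EuclideanSpace ℝ (Fin n) → EuclideanSpace ℝ (Fin n)} {a u v : EuclideanSpace ℝ (Fin n)}

@[simp]
theorem bregman_self : bregman h h' u u = 0 := by
  simp [bregman]

theorem StrongConvexOn.half_mul_norm_sub_sq_le_bregman {μ : ℝ} (hh : StrongConvexOn univ μ h)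
    (hd : HasGradientAt h (h' v) v) (u : EuclideanSpace ℝ (Fin n)) :
    μ / 2 * ‖u - v‖ ^ 2 ≤ bregman h h' u v := by
  have := hh.add_inner_add_le_of_hasGradientAt hd u
  unfold bregman
  linarith

theorem ConvexOn.bregman_nonneg (hh : ConvexOn ℝ univ h) (hd : HasGradientAt h (h' v) v)
    (u : EuclideanSpace ℝ (Fin n)) : 0 ≤ bregman h h' u v := by
  have := hh.add_inner_le_of_hasGradientAt hd u
  unfold bregman
  linarith

theorem ConvexOn.bregman_left (hh : ConvexOn ℝ univ h) (v : EuclideanSpace ℝ (Fin n)) :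
    ConvexOn ℝ univ fun u => bregman h h' u v := by
  have := (hh.sub ((innerSL ℝ (h' v)).toLinearMap.concaveOn convex_univ)).add_const
    (⟪h' v, v⟫_ℝ - h v)
  refine this.congr fun u _ => ?_
  simp [bregman, inner_sub_right]
  ring

theorem hasGradientAt_bregman_left (hd : HasGradientAt h a u) (v : EuclideanSpace ℝ (Fin n)) :
    HasGradientAt (fun u => bregman h h' u v) (a - h' v) u := by
  have := (hd.sub (hasGradientAt_const u (h v))).sub
    (hasGradientAt_inner_apply_sub (.id ℝ _) (h' v) v u)
  simpa [bregman, adjoint_id] using this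

theorem bregman_prox_descent {G : EuclideanSpace ℝ (Fin n) → ℝ}
    {G₁ x₀ x₁ : EuclideanSpace ℝ (Fin n)} {μ : ℝ} (hh : ConvexOn ℝ univ h)
    (hd : ∀ u, HasGradientAt h (h' u) u) (hG : HasGradientAt G G₁ x₁)
    (hsc : StrongConvexOn univ μ G ∨ StrongConvexOn univ μ h)
    (hmin : ∀ u, G x₁ + bregman h h' x₁ x₀ ≤ G u + bregman h h' u x₀) :
    G x₁ + μ / 2 * ‖x₁ - x₀‖ ^ 2 ≤ G x₀ := by
  have hmin₀ := hmin x₀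
  rw [bregman_self, add_zero] at hmin₀
  rcases hsc with hG_sc | hh_sc
  · have hF : StrongConvexOn univ μ fun u => G u + bregman h h' u x₀ := by
      have := UniformConvexOn.add hG_sc (hh.bregman_left (h' := h') x₀).uniformConvexOn_zero
      rwa [add_zero] at this
    have hF₁ := hG.add (hasGradientAt_bregman_left (h' := h') (hd x₁) x₀)
    have h0 : G₁ + (h' x₁ - h' x₀) = 0 :=
      IsLocalMin.hasGradientAt_eq_zero (Eventually.of_forall hmin) hF₁
    have := hF.add_inner_add_le_of_hasGradientAt hF₁ x₀
    rw [h0, inner_zero_left, bregman_self, norm_sub_rev] at this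
    linarith [hh.bregman_nonneg (hd x₀) x₁]
  · linarith [hh_sc.half_mul_norm_sub_sq_le_bregman (hd x₀) x₁]

end Bregman

section AugmentedLagrangian

variable {n₁ n₂ m : ℕ} {A : EuclideanSpace ℝ (Fin n₁) →L[ℝ] EuclideanSpace ℝ (Fin m)}
  {B : EuclideanSpace ℝ (Fin n₂) →L[ℝ] EuclideanSpace ℝ (Fin m)}
  {f : EuclideanSpace ℝ (Fin n₁) → ℝ} {g : EuclideanSpace ℝ (Fin n₂) → ℝ} {α : ℝ}

theorem hasGradientAt_augL {a x : EuclideanSpace ℝ (Fin n₁)} (hf : HasGradientAt f a x)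
    (y : EuclideanSpace ℝ (Fin n₂)) (p : EuclideanSpace ℝ (Fin m)) :
    HasGradientAt (fun x => augL A B f g α x y p) (a + adjoint A (p + α • (A x - B y))) x := by
  have := ((hf.add (hasGradientAt_const x (g y))).add
    (hasGradientAt_inner_apply_sub A p (B y) x)).add
    ((hasGradientAt_norm_apply_sub_sq A (B y) x).const_mul (α / 2))
  have hgrad : a + 0 + adjoint A p + (α / 2) • (2 : ℝ) • adjoint A (A x - B y) =
      a + adjoint A (p + α • (A x - B y)) := by
    rw [smul_smul, map_add, map_smul]
    norm_num
    abel
  rw [← hgrad]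
  exact this

theorem augL_add_smul_residual (x : EuclideanSpace ℝ (Fin n₁)) (y : EuclideanSpace ℝ (Fin n₂))
    (p : EuclideanSpace ℝ (Fin m)) :
    augL A B f g α x y (p + α • (A x - B y)) = augL A B f g α x y p + α * ‖A x - B y‖ ^ 2 := by
  simp only [augL, inner_add_left, real_inner_smul_left, real_inner_self_eq_norm_sq]
  ring

theorem bddBelow_range_augL (hf : Continuous f) (hg : LowerSemicontinuous g)
    {x : ℕ → EuclideanSpace ℝ (Fin n₁)} {y : ℕ → EuclideanSpace ℝ (Fin n₂)}
    {p : ℕ → EuclideanSpace ℝ (Fin m)}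
    (hbdd : Bornology.IsBounded (range fun k => (x k, y k, p k))) :
    BddBelow (range fun k => augL A B f g α (x k) (y k) (p k)) := by
  have hL : LowerSemicontinuous fun z : _ × _ × _ => augL A B f g α z.1 z.2.1 z.2.2 :=
    (((hf.comp continuous_fst).lowerSemicontinuous.add (hg.comp (by fun_prop))).add
      (Continuous.lowerSemicontinuous (by fun_prop))).add
      (Continuous.lowerSemicontinuous (by fun_prop))
  refine ((hL.lowerSemicontinuousOn _).bddBelow_of_isCompact hbdd.isCompact_closure).mono ?_
  rintro _ ⟨k, rfl⟩
  exact ⟨_, subset_closure (mem_range_self k), rfl⟩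

end AugmentedLagrangian

section BADMM

variable {n₁ n₂ m : ℕ} {A : EuclideanSpace ℝ (Fin n₁) →L[ℝ] EuclideanSpace ℝ (Fin m)}
  {B : EuclideanSpace ℝ (Fin n₂) →L[ℝ] EuclideanSpace ℝ (Fin m)}
  {f : EuclideanSpace ℝ (Fin n₁) → ℝ} {g : EuclideanSpace ℝ (Fin n₂) → ℝ} {α μ : ℝ}
  {f' φ' : EuclideanSpace ℝ (Fin n₁) → EuclideanSpace ℝ (Fin n₁)}
  {φ : EuclideanSpace ℝ (Fin n₁) → ℝ} {ψ : EuclideanSpace ℝ (Fin n₂) → ℝ}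
  {ψ' : EuclideanSpace ℝ (Fin n₂) → EuclideanSpace ℝ (Fin n₂)}
  {x₀ x₁ : EuclideanSpace ℝ (Fin n₁)} {y₀ y₁ : EuclideanSpace ℝ (Fin n₂)}
  {p₀ p₁ : EuclideanSpace ℝ (Fin m)}

theorem badmm_x_update_stationarity (hf : HasGradientAt f (f' x₁) x₁)
    (hφd : ∀ u, HasGradientAt φ (φ' u) u)
    (hx : ∀ x, augL A B f g α x₁ y₁ p₀ + bregman φ φ' x₁ x₀ ≤
      augL A B f g α x y₁ p₀ + bregman φ φ' x x₀) :
    f' x₁ + adjoint A (p₀ + α • (A x₁ - B y₁)) = φ' x₀ - φ' x₁ := by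
  have h0 := IsLocalMin.hasGradientAt_eq_zero (Eventually.of_forall hx)
    ((hasGradientAt_augL hf y₁ p₀).add (hasGradientAt_bregman_left (h' := φ') (hφd x₁) x₀))
  rw [← sub_eq_zero, ← h0]
  abel

theorem badmm_step_descent (hψ : ConvexOn ℝ univ ψ) (hψd : ∀ u, HasGradientAt ψ (ψ' u) u)
    (hφ : ConvexOn ℝ univ φ) (hφd : ∀ u, HasGradientAt φ (φ' u) u)
    (hf : HasGradientAt f (f' x₁) x₁)
    (hsc : (∀ y p, StrongConvexOn univ μ fun x => augL A B f g α x y p) ∨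
      StrongConvexOn univ μ φ)
    (hy : ∀ y, augL A B f g α x₀ y₁ p₀ + bregman ψ ψ' y₁ y₀ ≤
      augL A B f g α x₀ y p₀ + bregman ψ ψ' y y₀)
    (hx : ∀ x, augL A B f g α x₁ y₁ p₀ + bregman φ φ' x₁ x₀ ≤
      augL A B f g α x y₁ p₀ + bregman φ φ' x x₀)
    (hp : p₁ = p₀ + α • (A x₁ - B y₁)) (hα : 0 < α) :
    augL A B f g α x₁ y₁ p₁ + μ / 2 * ‖x₁ - x₀‖ ^ 2 ≤
      augL A B f g α x₀ y₀ p₀ + α⁻¹ * ‖p₁ - p₀‖ ^ 2 := by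
  have hy_step : augL A B f g α x₀ y₁ p₀ ≤ augL A B f g α x₀ y₀ p₀ := by
    have := hy y₀
    rw [bregman_self, add_zero] at this
    linarith [hψ.bregman_nonneg (hψd y₀) y₁]
  have hx_step := bregman_prox_descent hφ hφd (hasGradientAt_augL hf y₁ p₀)
    (hsc.imp_left fun h => h y₁ p₀) hx
  have hp_step : augL A B f g α x₁ y₁ p₁ = augL A B f g α x₁ y₁ p₀ + α⁻¹ * ‖p₁ - p₀‖ ^ 2 := by
    rw [hp, augL_add_smul_residual, add_sub_cancel_left, norm_smul, Real.norm_of_nonneg hα.le]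
    field_simp
  linarith

theorem tendsto_badmm_kkt_residual {ℓφ : ℝ} {x : ℕ → EuclideanSpace ℝ (Fin n₁)}
    {y : ℕ → EuclideanSpace ℝ (Fin n₂)} {p : ℕ → EuclideanSpace ℝ (Fin m)} (hα : 0 < α)
    (hφ' : ∀ u v, ‖φ' u - φ' v‖ ≤ ℓφ * ‖u - v‖)
    (hstat : ∀ k, f' (x (k + 1)) + adjoint A (p (k + 1)) = φ' (x k) - φ' (x (k + 1)))
    (hp : ∀ k, p (k + 1) = p k + α • (A (x (k + 1)) - B (y (k + 1))))
    (hΔx : Tendsto (fun k => x (k + 1) - x k) atTop (𝓝 0))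
    (hΔp : Tendsto (fun k => p (k + 1) - p k) atTop (𝓝 0)) :
    Tendsto (fun k => (f' (x k) + adjoint A (p k), A (x k) - B (y k))) atTop (𝓝 0) := by
  refine (tendsto_add_atTop_iff_nat 1).mp (Tendsto.prodMk_nhds ?_ ?_)
  · simp_rw [hstat]
    refine squeeze_zero_norm (fun k => (norm_sub_rev _ _).trans_le (hφ' _ _)) ?_
    simpa using hΔx.norm.const_mul ℓφ
  · have hres : ∀ k, A (x (k + 1)) - B (y (k + 1)) = α⁻¹ • (p (k + 1) - p k) := fun k => by
      rw [hp k, add_sub_cancel_left, inv_smul_smul₀ hα.ne']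
    simp_rw [hres]
    simpa using hΔp.const_smul α⁻¹

end BADMM

theorem badmm_cluster_point_stationary_general
{n₁ n₂ m : ℕ}
    (A : EuclideanSpace ℝ (Fin n₁) →L[ℝ] EuclideanSpace ℝ (Fin m))
    (B : EuclideanSpace ℝ (Fin n₂) →L[ℝ] EuclideanSpace ℝ (Fin m))
    (f : EuclideanSpace ℝ (Fin n₁) → ℝ) (g : EuclideanSpace ℝ (Fin n₂) → ℝ)
    (f' : EuclideanSpace ℝ (Fin n₁) → EuclideanSpace ℝ (Fin n₁))
    (hfgrad : ∀ u, HasGradientAt f (f' u) u)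
    (ℓf : ℝ) (hf' : ∀ u v, ‖f' u - f' v‖ ≤ ℓf * ‖u - v‖)
    (hg : LowerSemicontinuous g)
    (φ : EuclideanSpace ℝ (Fin n₁) → ℝ)
    (φ' : EuclideanSpace ℝ (Fin n₁) → EuclideanSpace ℝ (Fin n₁))
    (hφconv : ConvexOn ℝ Set.univ φ) (hφdiff : ∀ u, HasGradientAt φ (φ' u) u)
    (ℓφ : ℝ) (hφ' : ∀ u v, ‖φ' u - φ' v‖ ≤ ℓφ * ‖u - v‖)
    (ψ : EuclideanSpace ℝ (Fin n₂) → ℝ)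
    (ψ' : EuclideanSpace ℝ (Fin n₂) → EuclideanSpace ℝ (Fin n₂))
    (hψconv : ConvexOn ℝ Set.univ ψ) (hψdiff : ∀ u, HasGradientAt ψ (ψ' u) u)
    (α μ₀ : ℝ) (hα : 0 < α) (hμ₀ : 0 < μ₀)
    (hA : ∀ q : EuclideanSpace ℝ (Fin m),
      μ₀ * ‖q‖ ^ 2 ≤ ‖ContinuousLinearMap.adjoint A q‖ ^ 2)
    (μ₁ : ℝ) (hμ₁ : 0 < μ₁)
    (hsc : (∀ (y : EuclideanSpace ℝ (Fin n₂)) (p : EuclideanSpace ℝ (Fin m)),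
          ConvexOn ℝ Set.univ (fun x => augL A B f g α x y p - μ₁ / 2 * ‖x‖ ^ 2)) ∨
        ConvexOn ℝ Set.univ (fun x => φ x - μ₁ / 2 * ‖x‖ ^ 2))
    (hαbig : α > 4 * ((ℓf + ℓφ) ^ 2 + ℓφ ^ 2) / (μ₁ * μ₀))
    (x : ℕ → EuclideanSpace ℝ (Fin n₁)) (y : ℕ → EuclideanSpace ℝ (Fin n₂))
    (p : ℕ → EuclideanSpace ℝ (Fin m))
    (hy : ∀ k, ∀ y' : EuclideanSpace ℝ (Fin n₂),
      augL A B f g α (x k) (y (k + 1)) (p k) + bregman ψ ψ' (y (k + 1)) (y k) ≤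
        augL A B f g α (x k) y' (p k) + bregman ψ ψ' y' (y k))
    (hx : ∀ k, ∀ x' : EuclideanSpace ℝ (Fin n₁),
      augL A B f g α (x (k + 1)) (y (k + 1)) (p k) + bregman φ φ' (x (k + 1)) (x k) ≤
        augL A B f g α x' (y (k + 1)) (p k) + bregman φ φ' x' (x k))
    (hp : ∀ k, p (k + 1) = p k + α • (A (x (k + 1)) - B (y (k + 1))))
    (hbdd : Bornology.IsBounded (Set.range fun k => (x k, y k, p k)))
    (kj : ℕ → ℕ) (hkj : StrictMono kj)
    (xs : EuclideanSpace ℝ (Fin n₁)) (ys : EuclideanSpace ℝ (Fin n₂))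
    (ps : EuclideanSpace ℝ (Fin m))
    (hconv : Filter.Tendsto (fun j => (x (kj j), y (kj j), p (kj j)))
      Filter.atTop (nhds (xs, ys, ps))) :
    f' xs + ContinuousLinearMap.adjoint A ps = 0 ∧ A xs = B ys := by
  have hstat : ∀ k, f' (x (k + 1)) + adjoint A (p (k + 1)) = φ' (x k) - φ' (x (k + 1)) :=
    fun k => hp k ▸ badmm_x_update_stationarity (hfgrad _) hφdiff (hx k)
  have hgap : α⁻¹ * (2 * (ℓf + ℓφ) ^ 2 + 2 * ℓφ ^ 2) < μ₁ / 2 * μ₀ := by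
    rw [gt_iff_lt, div_lt_iff₀ (by positivity)] at hαbig
    rw [inv_mul_lt_iff₀ hα]
    linarith
  have hf_cont : Continuous f := continuous_iff_continuousAt.mpr fun u => (hfgrad u).continuousAt
  have hsc' : (∀ y p, StrongConvexOn univ μ₁ fun x => augL A B f g α x y p) ∨
      StrongConvexOn univ μ₁ φ :=
    hsc.imp (fun h y p => strongConvexOn_iff_convex.mpr (h y p)) strongConvexOn_iff_convex.mpr
  obtain ⟨hΔx, hΔp⟩ := summable_sq_of_descent (bddBelow_range_augL hf_cont hg hbdd)
    (fun k => badmm_step_descent hψconv hψdiff hφconv hφdiff (hfgrad _) hsc' (hy k) (hx k)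
      (hp k) hα)
    (sq_norm_dual_step_le hstat hf' hφ' hA) hμ₀ (by positivity) (by positivity) hgap
  have hkkt := tendsto_badmm_kkt_residual hα hφ' hstat hp
    (tendsto_zero_of_summable_norm_sq hΔx) (tendsto_zero_of_summable_norm_sq hΔp)
  have hf'_cont : Continuous f' := (LipschitzWith.of_dist_le' (K := ℓf) fun u v => by
    simpa [dist_eq_norm] using hf' u v).continuous
  have hkkt_cont : Continuous fun z : _ × _ × _ => (f' z.1 + adjoint A z.2.2, A z.1 - B z.2.1) := by
    fun_prop
  have hlim := tendsto_nhds_unique ((hkkt_cont.tendsto _).comp hconv)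
    (hkkt.comp hkj.tendsto_atTop)
  simpa [Prod.ext_iff, sub_eq_zero] using hlim

theorem badmm_cluster_point_stationary
{n₁ n₂ m : ℕ} (hn₁ : 0 < n₁) (hn₂ : 0 < n₂) (hm : 0 < m)
    (A : EuclideanSpace ℝ (Fin n₁) →L[ℝ] EuclideanSpace ℝ (Fin m))
    (B : EuclideanSpace ℝ (Fin n₂) →L[ℝ] EuclideanSpace ℝ (Fin m))
    (f : EuclideanSpace ℝ (Fin n₁) → ℝ) (g : EuclideanSpace ℝ (Fin n₂) → ℝ)
    (f' : EuclideanSpace ℝ (Fin n₁) → EuclideanSpace ℝ (Fin n₁))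
    (hfC1 : ContDiff ℝ 1 f) (hfgrad : ∀ u, HasGradientAt f (f' u) u)
    (ℓf : ℝ) (hℓf : 0 ≤ ℓf) (hf' : ∀ u v, ‖f' u - f' v‖ ≤ ℓf * ‖u - v‖)
    (hg : LowerSemicontinuous g)
    (φ : EuclideanSpace ℝ (Fin n₁) → ℝ)
    (φ' : EuclideanSpace ℝ (Fin n₁) → EuclideanSpace ℝ (Fin n₁))
    (hφconv : ConvexOn ℝ Set.univ φ) (hφdiff : ∀ u, HasGradientAt φ (φ' u) u)
    (ℓφ : ℝ) (hℓφ : 0 ≤ ℓφ) (hφ' : ∀ u v, ‖φ' u - φ' v‖ ≤ ℓφ * ‖u - v‖)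
    (ψ : EuclideanSpace ℝ (Fin n₂) → ℝ)
    (ψ' : EuclideanSpace ℝ (Fin n₂) → EuclideanSpace ℝ (Fin n₂))
    (hψconv : ConvexOn ℝ Set.univ ψ) (hψdiff : ∀ u, HasGradientAt ψ (ψ' u) u)
    (ℓψ : ℝ) (hℓψ : 0 ≤ ℓψ) (hψ' : ∀ u v, ‖ψ' u - ψ' v‖ ≤ ℓψ * ‖u - v‖)
    (α μ₀ : ℝ) (hα : 0 < α) (hμ₀ : 0 < μ₀)
    (hA : ∀ q : EuclideanSpace ℝ (Fin m),
      μ₀ * ‖q‖ ^ 2 ≤ ‖ContinuousLinearMap.adjoint A q‖ ^ 2)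
    (μ₁ : ℝ) (hμ₁ : 0 < μ₁)
    (hsc : (∀ (y : EuclideanSpace ℝ (Fin n₂)) (p : EuclideanSpace ℝ (Fin m)),
          ConvexOn ℝ Set.univ (fun x => augL A B f g α x y p - μ₁ / 2 * ‖x‖ ^ 2)) ∨
        ConvexOn ℝ Set.univ (fun x => φ x - μ₁ / 2 * ‖x‖ ^ 2))
    (hαbig : α > 4 * ((ℓf + ℓφ) ^ 2 + ℓφ ^ 2) / (μ₁ * μ₀))
    (x : ℕ → EuclideanSpace ℝ (Fin n₁)) (y : ℕ → EuclideanSpace ℝ (Fin n₂))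
    (p : ℕ → EuclideanSpace ℝ (Fin m))
    (hy : ∀ k, ∀ y' : EuclideanSpace ℝ (Fin n₂),
      augL A B f g α (x k) (y (k + 1)) (p k) + bregman ψ ψ' (y (k + 1)) (y k) ≤
        augL A B f g α (x k) y' (p k) + bregman ψ ψ' y' (y k))
    (hx : ∀ k, ∀ x' : EuclideanSpace ℝ (Fin n₁),
      augL A B f g α (x (k + 1)) (y (k + 1)) (p k) + bregman φ φ' (x (k + 1)) (x k) ≤
        augL A B f g α x' (y (k + 1)) (p k) + bregman φ φ' x' (x k))
    (hp : ∀ k, p (k + 1) = p k + α • (A (x (k + 1)) - B (y (k + 1))))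
    (hB : Function.Injective B)
    (hbdd : Bornology.IsBounded (Set.range fun k => (x k, y k, p k)))
    (kj : ℕ → ℕ) (hkj : StrictMono kj)
    (xs : EuclideanSpace ℝ (Fin n₁)) (ys : EuclideanSpace ℝ (Fin n₂))
    (ps : EuclideanSpace ℝ (Fin m))
    (hconv : Filter.Tendsto (fun j => (x (kj j), y (kj j), p (kj j)))
      Filter.atTop (nhds (xs, ys, ps))) :
    f' xs + ContinuousLinearMap.adjoint A ps = 0 ∧ A xs = B ys :=
  badmm_cluster_point_stationary_general A B f g f' hfgrad ℓf hf' hg φ φ' hφconv hφdiff ℓφ hφ' ψ ψ'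
    hψconv hψdiff α μ₀ hα hμ₀ hA μ₁ hμ₁ hsc hαbig x y p hy hx hp hbdd kj hkj xs ys ps hconv
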